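/- Let η and η′ be particle configurations whose path encodings S and S′ both lie in 𝒮^{inv}, and for k ∈ ℤ set w^k = sup_{m ≤ 0} (T^k S) m and w′^k = sup_{m ≤ 0} (T^k S′) m (the carrier values at the origin of the k-th iterates). Suppose w^k = w′^k for every k ∈ ℤ, and suppose the sequence (w^k)_{k∈ℤ} has infinitely many odd gaps between zeros in both directions. Then η = η′. -/

import Mathlib

/-- The past maximum `M n = sup_{m ≤ n} S m` of a two-sided path. -/
noncomputable def ballMax (S : ℤ → ℤ) (n : ℤ) : ℤ := sSup (S '' Set.Iic n)

/-- The future minimum `I n = inf_{m ≥ n} S m` of a two-sided path. -/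
noncomputable def ballMin (S : ℤ → ℤ) (n : ℤ) : ℤ := sInf (S '' Set.Ici n)

/-- Pitman's transform `(TS) n = 2 M n - S n - 2 M 0`. -/
noncomputable def Tbb (S : ℤ → ℤ) : ℤ → ℤ := fun n => 2 * ballMax S n - S n - 2 * ballMax S 0

/-- The inverse transform `(T⁻¹S) n = 2 I n - S n - 2 I 0`. -/
noncomputable def TbbInv (S : ℤ → ℤ) : ℤ → ℤ := fun n => 2 * ballMin S n - S n - 2 * ballMin S 0

/-- The `k`-th iterate `T^k`, using `T` for `k ≥ 0` and `T⁻¹` for `k < 0`. -/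
noncomputable def Titer (k : ℤ) (S : ℤ → ℤ) : ℤ → ℤ :=
  if 0 ≤ k then Tbb^[k.toNat] S else TbbInv^[(-k).toNat] S

/-- `S ∈ 𝒮⁰`: a two-sided nearest-neighbour path started at `0`. -/
def inS0 (S : ℤ → ℤ) : Prop := S 0 = 0 ∧ ∀ n : ℤ, |S n - S (n - 1)| = 1

/-- `S ∈ 𝒮^{rev}`: the reversible set. -/
def inSrev (S : ℤ → ℤ) : Prop :=
  inS0 S ∧ BddAbove (S '' Set.Iic 0) ∧ BddBelow (S '' Set.Ici 0) ∧
    Filter.limsup (fun n : ℤ => ((S n : ℝ) : EReal)) Filter.atTop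
      = ⨆ n : ℤ, ((S n : ℝ) : EReal) ∧
    Filter.liminf (fun n : ℤ => ((S n : ℝ) : EReal)) Filter.atBot
      = ⨅ n : ℤ, ((S n : ℝ) : EReal)

/-- `S ∈ 𝒮^{inv}`: all iterates of the dynamics lie in the reversible set. -/
def inSinv (S : ℤ → ℤ) : Prop := ∀ k : ℤ, inSrev (Titer k S)

/-- An odd gap between consecutive zeros of `w` at `k < k'`. -/
def OddGap (w : ℤ → ℤ) (k k' : ℤ) : Prop :=
  k < k' ∧ w k = 0 ∧ w k' = 0 ∧ (∀ j : ℤ, k < j → j < k' → 0 < w j) ∧ Odd (k' - k)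

/-- `w` has infinitely many odd gaps between zeros in both directions. -/
def OddGapsBothDir (w : ℤ → ℤ) : Prop :=
  (∀ N : ℤ, ∃ k k' : ℤ, N ≤ k ∧ OddGap w k k') ∧
  (∀ N : ℤ, ∃ k k' : ℤ, k' ≤ N ∧ OddGap w k k')

/-!
Write `W n k` for the carrier of `T^k S` at site `n` and `D n k` for its step
`(T^k S) n - (T^k S) (n - 1)`. Pitman's transform gives the local rules
`W (n+1) k = max (W n k - D (n+1) k) 0` and
`D (n+1) (k+1) = 2 max 0 (D (n+1) k - W n k) - D (n+1) k`.
So a zero `W n k = 0` forces `D (n+1) (k+1) = 1`, after which `k ↦ D (n+1) k` is determined by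
`k ↦ W n k`; inside a gap between zeros of `W n` it alternates, so the right end of an odd gap is
a zero of `W (n+1)`, and odd gaps persist from site `n` to site `n+1`. By induction the carrier
sequences of `S` and `S'` agree at every site `n ≥ 0`, hence so do their steps at sites `n ≥ 1`.
The reflection `n ↦ -S (-n)` exchanges `T` and `T⁻¹` and turns the carrier sequence at the origin
into `k ↦ w^(-k-1)`, which handles the sites `n ≤ 0`.
-/

open Set Filter

section PastMaximum

variable {X : ℤ → ℤ}

lemma bddAbove_image_Iic (hb : BddAbove (X '' Iic 0)) (n : ℤ) : BddAbove (X '' Iic n) :=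
  (hb.union ((finite_Icc 0 n).image X).bddAbove).mono <| by
    rw [← image_union]; exact image_mono Iic_subset_Iic_union_Icc

lemma le_ballMax (hb : BddAbove (X '' Iic 0)) {m n : ℤ} (h : m ≤ n) : X m ≤ ballMax X n :=
  le_csSup (bddAbove_image_Iic hb n) (mem_image_of_mem X h)

lemma ballMax_le {n B : ℤ} (h : ∀ m ≤ n, X m ≤ B) : ballMax X n ≤ B :=
  csSup_le ⟨X n, mem_image_of_mem X self_mem_Iic⟩ (forall_mem_image.2 h)

lemma ballMax_mono (hb : BddAbove (X '' Iic 0)) : Monotone (ballMax X) :=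
  fun _ _ h => ballMax_le fun _ hj => le_ballMax hb (hj.trans h)

lemma exists_eq_ballMax (hb : BddAbove (X '' Iic 0)) (n : ℤ) : ∃ m ≤ n, X m = ballMax X n :=
  Int.csSup_mem ⟨X n, mem_image_of_mem X self_mem_Iic⟩ (bddAbove_image_Iic hb n)

lemma ballMax_succ (hb : BddAbove (X '' Iic 0)) (n : ℤ) :
    ballMax X (n + 1) = max (ballMax X n) (X (n + 1)) := by
  refine le_antisymm (ballMax_le fun m hm => ?_) (max_le (ballMax_mono hb (by omega))
    (le_ballMax hb le_rfl))
  rcases hm.lt_or_eq with hm | rfl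
  · exact le_max_of_le_left (le_ballMax hb (by omega))
  · exact le_max_right _ _

lemma ballMax_sub_le_Tbb (hb : BddAbove (X '' Iic 0)) {n m : ℤ} (h : n ≤ m) :
    ballMax X n - 2 * ballMax X 0 ≤ Tbb X m := by
  have := ballMax_mono hb h
  have := le_ballMax hb (le_refl m)
  simp only [Tbb]
  omega

end PastMaximum

lemma frequently_le_of_limsup_eq_iSup {f : ℤ → ℤ}
    (h : limsup (fun n => ((f n : ℝ) : EReal)) atTop = ⨆ n, ((f n : ℝ) : EReal)) (a : ℤ) :
    ∃ᶠ n in atTop, f a ≤ f n := by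
  have hlt : (((f a - 1 : ℤ) : ℝ) : EReal) < limsup (fun n => ((f n : ℝ) : EReal)) atTop := by
    rw [h]
    refine lt_of_lt_of_le ?_ (le_iSup (fun n => ((f n : ℝ) : EReal)) a)
    exact EReal.coe_lt_coe_iff.2 (by simp)
  refine (frequently_lt_of_lt_limsup (by isBoundedDefault) hlt).mono fun n hn => ?_
  have : ((f a - 1 : ℤ) : ℝ) < f n := EReal.coe_lt_coe_iff.1 hn
  have : f a - 1 < f n := by exact_mod_cast this
  omega

lemma frequently_le_of_liminf_eq_iInf {f : ℤ → ℤ}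
    (h : liminf (fun n => ((f n : ℝ) : EReal)) atBot = ⨅ n, ((f n : ℝ) : EReal)) (a : ℤ) :
    ∃ᶠ n in atBot, f n ≤ f a := by
  have hlt : liminf (fun n => ((f n : ℝ) : EReal)) atBot < (((f a + 1 : ℤ) : ℝ) : EReal) := by
    rw [h]
    refine lt_of_le_of_lt (iInf_le (fun n => ((f n : ℝ) : EReal)) a) ?_
    exact EReal.coe_lt_coe_iff.2 (by simp)
  refine (frequently_lt_of_liminf_lt (by isBoundedDefault) hlt).mono fun n hn => ?_
  have : (f n : ℝ) < ((f a + 1 : ℤ) : ℝ) := EReal.coe_lt_coe_iff.1 hn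
  have : f n < f a + 1 := by exact_mod_cast this
  omega

/-- The half of `𝒮^{rev}` that makes `T⁻¹ ∘ T` the identity; `𝒮^{rev}` gives it for the path
and for its mirror image `reflect`. -/
structure RecurrentAbove (X : ℤ → ℤ) : Prop where
  step : ∀ n, |X n - X (n - 1)| = 1
  bddAbove : BddAbove (X '' Iic 0)
  frequently_ge : ∀ a, ∃ᶠ m in atTop, X a ≤ X m

namespace RecurrentAbove

variable {X : ℤ → ℤ}

/-- Nearest-neighbour steps force the first return above `ballMax X n` to hit it exactly. -/
lemma exists_ge_eq_ballMax (h : RecurrentAbove X) (n : ℤ) :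
    ∃ m, n ≤ m ∧ X m = ballMax X n ∧ ballMax X m = ballMax X n := by
  obtain ⟨a, -, ha⟩ := exists_eq_ballMax h.bddAbove n
  obtain ⟨m₁, hm₁, hXm₁⟩ := frequently_atTop.1 (h.frequently_ge a) n
  obtain ⟨m, ⟨hnm, hm⟩, hmin⟩ := Int.exists_least_of_bdd
    (P := fun m => n ≤ m ∧ ballMax X n ≤ X m) ⟨n, fun _ h => h.1⟩ ⟨m₁, hm₁, ha ▸ hXm₁⟩
  have hbelow : ∀ j, n ≤ j → j < m → X j < ballMax X n := fun j hnj hjm =>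
    lt_of_not_ge fun hj => (hmin j ⟨hnj, hj⟩).not_gt hjm
  have hXm : X m = ballMax X n := by
    rcases hnm.eq_or_lt with rfl | hlt
    · exact le_antisymm (le_ballMax h.bddAbove le_rfl) hm
    · have := hbelow (m - 1) (by omega) (by omega)
      rcases (abs_eq zero_le_one).1 (h.step m) with h' | h' <;> omega
  refine ⟨m, hnm, hXm, le_antisymm (ballMax_le fun j hj => ?_) (ballMax_mono h.bddAbove hnm)⟩
  rcases le_or_gt j n with hjn | hjn
  · exact le_ballMax h.bddAbove hjn
  · rcases hj.eq_or_lt with rfl | hjm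
    · exact hXm.le
    · exact (hbelow j hjn.le hjm).le

lemma ballMin_Tbb (h : RecurrentAbove X) (n : ℤ) :
    ballMin (Tbb X) n = ballMax X n - 2 * ballMax X 0 := by
  have hlow : ∀ m ∈ Ici n, ballMax X n - 2 * ballMax X 0 ≤ Tbb X m :=
    fun _ hm => ballMax_sub_le_Tbb h.bddAbove hm
  obtain ⟨m, hnm, hXm, hMm⟩ := h.exists_ge_eq_ballMax n
  refine le_antisymm ?_ (le_csInf ⟨_, mem_image_of_mem _ self_mem_Ici⟩ (forall_mem_image.2 hlow))
  calc ballMin (Tbb X) n ≤ Tbb X m :=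
        csInf_le ⟨_, forall_mem_image.2 hlow⟩ (mem_image_of_mem _ hnm)
    _ = ballMax X n - 2 * ballMax X 0 := by simp only [Tbb, hXm, hMm]; ring

lemma TbbInv_Tbb (h : RecurrentAbove X) : TbbInv (Tbb X) = X := by
  funext n
  simp only [TbbInv, h.ballMin_Tbb, Tbb]
  ring

end RecurrentAbove

def reflect (X : ℤ → ℤ) : ℤ → ℤ := fun n => -X (-n)

section Reflection

variable {X : ℤ → ℤ}

@[simp]
lemma reflect_apply (n : ℤ) : reflect X n = -X (-n) := rfl

@[simp]
lemma reflect_reflect : reflect (reflect X) = X := by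
  funext n
  simp

lemma image_reflect_Iic (n : ℤ) : reflect X '' Iic n = -(X '' Ici (-n)) := by
  ext y
  simp only [mem_image, mem_Iic, mem_Ici, Set.mem_neg, reflect_apply]
  constructor
  · rintro ⟨m, hm, rfl⟩
    exact ⟨-m, by omega, by simp⟩
  · rintro ⟨m, hm, hy⟩
    exact ⟨-m, by omega, by simp [hy]⟩

lemma bddAbove_image_reflect_Iic_iff (n : ℤ) :
    BddAbove (reflect X '' Iic n) ↔ BddBelow (X '' Ici (-n)) := by
  rw [image_reflect_Iic, bddAbove_neg]

lemma ballMax_reflect (hb : BddBelow (X '' Ici 0)) (n : ℤ) :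
    ballMax (reflect X) n = -ballMin X (-n) := by
  have hb' : BddAbove (reflect X '' Iic 0) :=
    (bddAbove_image_reflect_Iic_iff 0).2 (by simpa using hb)
  rw [ballMax, image_reflect_Iic, csSup_neg ⟨X (-n), mem_image_of_mem X self_mem_Ici⟩]
  · rfl
  · exact (bddAbove_image_reflect_Iic_iff n).1 (bddAbove_image_Iic hb' n)

lemma Tbb_reflect (hb : BddBelow (X '' Ici 0)) : Tbb (reflect X) = reflect (TbbInv X) := by
  funext n
  simp only [Tbb, TbbInv, reflect_apply, ballMax_reflect hb, neg_zero]
  ring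

end Reflection

namespace inSrev

variable {X : ℤ → ℤ}

lemma recurrentAbove (h : inSrev X) : RecurrentAbove X :=
  ⟨h.1.2, h.2.1, frequently_le_of_limsup_eq_iSup h.2.2.2.1⟩

lemma recurrentAbove_reflect (h : inSrev X) : RecurrentAbove (reflect X) where
  step n := by
    have := h.1.2 (-n + 1)
    rw [show -n + 1 - 1 = -n by ring] at this
    rw [reflect_apply, reflect_apply, neg_sub_neg, show -(n - 1) = -n + 1 by ring, this]
  bddAbove := (bddAbove_image_reflect_Iic_iff 0).2 (by simpa using h.2.2.1)
  frequently_ge a := tendsto_neg_atBot_atTop.frequently <|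
    (frequently_le_of_liminf_eq_iInf h.2.2.2.2 (-a)).mono fun m hm => by simpa using hm

/-- Reflection conjugates `T⁻¹` to `T`, so this is `TbbInv_Tbb` for the reflected path. -/
lemma Tbb_TbbInv (h : inSrev X) : Tbb (TbbInv X) = X := by
  have hm := h.recurrentAbove_reflect
  have hTbb : BddBelow (Tbb (reflect X) '' Ici 0) :=
    ⟨_, forall_mem_image.2 fun _ hm' => ballMax_sub_le_Tbb hm.bddAbove hm'⟩
  have hinv : TbbInv X = reflect (Tbb (reflect X)) := by rw [Tbb_reflect h.2.2.1, reflect_reflect]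
  rw [hinv, Tbb_reflect hTbb, hm.TbbInv_Tbb, reflect_reflect]

end inSrev

section Iterates

variable {S : ℤ → ℤ}

lemma Titer_natCast (j : ℕ) (S : ℤ → ℤ) : Titer j S = Tbb^[j] S := by
  simp [Titer]

lemma Titer_neg_natCast (j : ℕ) (S : ℤ → ℤ) : Titer (-j) S = TbbInv^[j] S := by
  rcases j with _ | j
  · simp [Titer]
  · rw [Titer, if_neg (by omega)]
    congr

@[simp]
lemma Titer_zero (S : ℤ → ℤ) : Titer 0 S = S := by
  simpa using Titer_natCast 0 S

lemma inSinv.Titer_succ (hS : inSinv S) (k : ℤ) : Titer (k + 1) S = Tbb (Titer k S) := by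
  rcases le_or_gt 0 k with hk | hk
  · lift k to ℕ using hk
    rw [← Nat.cast_succ, Titer_natCast, Titer_natCast, Function.iterate_succ_apply']
  · obtain ⟨j, rfl⟩ : ∃ j : ℕ, k = -(j + 1 : ℕ) := ⟨(-k - 1).toNat, by omega⟩
    have hj : -((j + 1 : ℕ) : ℤ) + 1 = -(j : ℤ) := by push_cast; ring
    have hrev := hS (-j)
    rw [Titer_neg_natCast] at hrev
    rw [hj, Titer_neg_natCast, Titer_neg_natCast, Function.iterate_succ_apply', hrev.Tbb_TbbInv]

lemma inSinv.Titer_sub_one (hS : inSinv S) (k : ℤ) : Titer (k - 1) S = TbbInv (Titer k S) := by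
  rw [← sub_add_cancel k 1, hS.Titer_succ, add_sub_cancel_right,
    (hS (k - 1)).recurrentAbove.TbbInv_Tbb]

end Iterates

section OddGaps

variable {v v' : ℤ → ℤ}

/-- Take `c` the last zero before `b` at odd distance from `b`, and `d` the first zero after
`c`: the gap `(c, d)` is odd, for otherwise `d` would be a later choice of `c`. -/
lemma exists_oddGap_of_odd_sub (hv : ∀ k, 0 ≤ v k) {a b : ℤ} (hab : a < b) (ha : v a = 0)
    (hb : v b = 0) (hodd : Odd (b - a)) : ∃ c d, a ≤ c ∧ d ≤ b ∧ OddGap v c d := by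
  obtain ⟨c, ⟨hac, hcb, hc, hcodd⟩, hcmax⟩ := Int.exists_greatest_of_bdd
    (P := fun c => a ≤ c ∧ c < b ∧ v c = 0 ∧ Odd (b - c)) ⟨b, fun _ h => h.2.1.le⟩
    ⟨a, le_rfl, hab, ha, hodd⟩
  obtain ⟨d, ⟨hcd, hdb, hd⟩, hdmin⟩ := Int.exists_least_of_bdd
    (P := fun d => c < d ∧ d ≤ b ∧ v d = 0) ⟨c, fun _ h => h.1.le⟩ ⟨b, hcb, le_rfl, hb⟩
  have hpos : ∀ j, c < j → j < d → 0 < v j := fun j hcj hjd =>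
    (hv j).lt_of_ne fun hj => (hdmin j ⟨hcj, by omega, hj.symm⟩).not_gt hjd
  refine ⟨c, d, hac, hdb, hcd, hc, hd, hpos, ?_⟩
  rcases hdb.lt_or_eq with hdb | rfl
  · have hdeven : ¬Odd (b - d) := fun h => (hcmax d ⟨by omega, hdb, hd, h⟩).not_gt hcd
    rw [Int.odd_iff] at hcodd hdeven ⊢
    omega
  · exact hcodd

/-- The first odd gap after the zero `a` ends at odd distance from `a`, since the zeros before
it are at even distance from `a`. -/
lemma exists_oddGap_odd_sub_of_le (hv : ∀ k, 0 ≤ v k) {a y y' : ℤ} (ha : v a = 0)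
    (hy : OddGap v y y') (hay : a ≤ y) :
    ∃ s t, a ≤ s ∧ t ≤ y' ∧ OddGap v s t ∧ Odd (t - a) := by
  obtain ⟨t, ⟨s, has, hst⟩, htmin⟩ := Int.exists_least_of_bdd
    (P := fun t => ∃ s, a ≤ s ∧ OddGap v s t) ⟨a, fun _ ⟨_, h, hg⟩ => h.trans hg.1.le⟩
    ⟨y', y, hay, hy⟩
  have hseven : ¬Odd (s - a) := by
    intro hodd
    have has' : a < s := by
      rcases has.lt_or_eq with h | rfl
      · exact h
      · simp at hodd
    obtain ⟨c, d, hac, hds, hcd⟩ := exists_oddGap_of_odd_sub hv has' ha hst.2.1 hodd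
    exact (htmin d ⟨c, hac, hcd⟩).not_gt (hds.trans_lt hst.1)
  refine ⟨s, t, has, htmin y' ⟨y, hay, hy⟩, hst, ?_⟩
  have hts := hst.2.2.2.2
  rw [Int.odd_iff] at hseven hts ⊢
  omega

/-- Consecutive right ends of odd gaps of `v` are at odd distance, so between them `v'` has an
odd gap. -/
lemma OddGapsBothDir.of_oddGap_right_eq_zero (hv : ∀ k, 0 ≤ v k) (hv' : ∀ k, 0 ≤ v' k)
    (hzero : ∀ k k', OddGap v k k' → v' k' = 0) (h : OddGapsBothDir v) :
    OddGapsBothDir v' := by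
  have between : ∀ {z z' y y'}, OddGap v z z' → OddGap v y y' → z' ≤ y →
      ∃ c d, z' ≤ c ∧ d ≤ y' ∧ OddGap v' c d := by
    intro z z' y y' hz hy hzy
    obtain ⟨s, t, hs, ht, hst, hodd⟩ := exists_oddGap_odd_sub_of_le hv hz.2.2.1 hy hzy
    obtain ⟨c, d, hc, hd, hcd⟩ :=
      exists_oddGap_of_odd_sub hv' (hs.trans_lt hst.1) (hzero _ _ hz) (hzero _ _ hst) hodd
    exact ⟨c, d, hc, hd.trans ht, hcd⟩
  refine ⟨fun N => ?_, fun N => ?_⟩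
  · obtain ⟨z, z', hN, hz⟩ := h.1 N
    obtain ⟨y, y', hy, hy'⟩ := h.1 z'
    obtain ⟨c, d, hc, -, hcd⟩ := between hz hy' hy
    exact ⟨c, d, hN.trans (hz.1.le.trans hc), hcd⟩
  · obtain ⟨y, y', hN, hy⟩ := h.2 N
    obtain ⟨z, z', hz', hz⟩ := h.2 y
    obtain ⟨c, d, -, hd, hcd⟩ := between hz hy hz'
    exact ⟨c, d, hd.trans hN, hcd⟩

lemma OddGap.comp_neg_sub_one {k k' : ℤ} (h : OddGap v k k') :
    OddGap (fun j => v (-j - 1)) (-k' - 1) (-k - 1) := by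
  obtain ⟨hlt, hk, hk', hpos, hodd⟩ := h
  refine ⟨by omega, by simpa using hk', by simpa using hk,
    fun j h₁ h₂ => hpos _ (by omega) (by omega), ?_⟩
  rw [Int.odd_iff] at hodd ⊢
  omega

lemma OddGapsBothDir.comp_neg_sub_one (h : OddGapsBothDir v) :
    OddGapsBothDir (fun j => v (-j - 1)) := by
  refine ⟨fun N => ?_, fun N => ?_⟩
  · obtain ⟨k, k', hk', hgap⟩ := h.2 (-N - 1)
    exact ⟨-k' - 1, -k - 1, by omega, hgap.comp_neg_sub_one⟩
  · obtain ⟨k, k', hk, hgap⟩ := h.1 (-N - 1)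
    exact ⟨-k' - 1, -k - 1, by omega, hgap.comp_neg_sub_one⟩

lemma OddGapsBothDir.exists_le_eq_zero (h : OddGapsBothDir v) (N : ℤ) : ∃ b ≤ N, v b = 0 :=
  let ⟨_, k', hk', hgap⟩ := h.2 N
  ⟨k', hk', hgap.2.2.1⟩

end OddGaps

structure IsTbbOrbit (A : ℤ → ℤ → ℤ) : Prop where
  step : ∀ k n, |A k n - A k (n - 1)| = 1
  bddAbove : ∀ k, BddAbove (A k '' Iic 0)
  succ : ∀ k, A (k + 1) = Tbb (A k)

/-- The carrier `W n = M n - S n` of the path `A k`, read as a sequence in the time `k`. -/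
noncomputable def carrier (A : ℤ → ℤ → ℤ) (n k : ℤ) : ℤ := ballMax (A k) n - A k n

def increment (A : ℤ → ℤ → ℤ) (n k : ℤ) : ℤ := A k n - A k (n - 1)

namespace IsTbbOrbit

variable {A A' : ℤ → ℤ → ℤ}

lemma carrier_nonneg (hA : IsTbbOrbit A) (n k : ℤ) : 0 ≤ carrier A n k :=
  sub_nonneg.2 (le_ballMax (hA.bddAbove k) le_rfl)

lemma increment_eq_one_or_neg_one (hA : IsTbbOrbit A) (n k : ℤ) :
    increment A n k = 1 ∨ increment A n k = -1 :=
  (abs_eq zero_le_one).1 (hA.step k n)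

lemma carrier_succ (hA : IsTbbOrbit A) (n k : ℤ) :
    carrier A (n + 1) k = max (carrier A n k - increment A (n + 1) k) 0 := by
  simp only [carrier, increment, add_sub_cancel_right, sub_sub_sub_cancel_right]
  rw [ballMax_succ (hA.bddAbove k), ← max_sub_sub_right, sub_self]

lemma increment_succ (hA : IsTbbOrbit A) (n k : ℤ) :
    increment A (n + 1) (k + 1) =
      2 * max 0 (increment A (n + 1) k - carrier A n k) - increment A (n + 1) k := by
  have hM : ballMax (A k) (n + 1) - ballMax (A k) n = max 0 (A k (n + 1) - ballMax (A k) n) := by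
    rw [ballMax_succ (hA.bddAbove k), ← max_sub_sub_right, sub_self]
  simp only [increment, carrier, hA.succ, Tbb, add_sub_cancel_right, sub_sub_sub_cancel_right]
  linear_combination 2 * hM

lemma increment_succ_of_carrier_eq_zero (hA : IsTbbOrbit A) {n k : ℤ} (h : carrier A n k = 0) :
    increment A (n + 1) (k + 1) = 1 := by
  rw [hA.increment_succ, h]
  rcases hA.increment_eq_one_or_neg_one (n + 1) k with h' | h' <;> rw [h'] <;> norm_num

lemma increment_succ_of_carrier_pos (hA : IsTbbOrbit A) {n k : ℤ} (h : 0 < carrier A n k) :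
    increment A (n + 1) (k + 1) = -increment A (n + 1) k := by
  rw [hA.increment_succ, max_eq_left]
  · ring
  · rcases hA.increment_eq_one_or_neg_one (n + 1) k with h' | h' <;> omega

lemma increment_of_mem_gap (hA : IsTbbOrbit A) {n z : ℤ} (hz : carrier A n z = 0) {j : ℤ}
    (hzj : z < j) (hpos : ∀ i, z < i → i < j → 0 < carrier A n i) :
    increment A (n + 1) j = if Odd (j - z) then 1 else -1 := by
  revert hpos
  induction j, (hzj : z + 1 ≤ j) using Int.leInduction with
  | base => simp [hA.increment_succ_of_carrier_eq_zero hz]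
  | succ j hzj ih =>
    intro hpos
    rw [hA.increment_succ_of_carrier_pos (hpos j (by omega) (by omega)),
      ih fun i h₁ h₂ => hpos i h₁ (by omega)]
    simp only [show j + 1 - z = j - z + 1 by ring, odd_add_one, ← Int.not_odd_iff_even]
    split_ifs <;> rfl

lemma carrier_succ_eq_zero_of_oddGap (hA : IsTbbOrbit A) {n z z' : ℤ}
    (h : OddGap (carrier A n) z z') : carrier A (n + 1) z' = 0 := by
  obtain ⟨hzz', hz, hz', hpos, hodd⟩ := h
  rw [hA.carrier_succ, hz', hA.increment_of_mem_gap hz hzz' hpos, if_pos hodd]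
  norm_num

lemma oddGapsBothDir_succ (hA : IsTbbOrbit A) {n : ℤ} (h : OddGapsBothDir (carrier A n)) :
    OddGapsBothDir (carrier A (n + 1)) :=
  h.of_oddGap_right_eq_zero (hA.carrier_nonneg n) (hA.carrier_nonneg (n + 1))
    fun _ _ => hA.carrier_succ_eq_zero_of_oddGap

/-- After a zero of the carrier at site `n` the step at site `n + 1` is `+1`, and from then on
the recursion `increment_succ` determines it from the carrier. -/
lemma increment_succ_eq (hA : IsTbbOrbit A) (hA' : IsTbbOrbit A') {n : ℤ}
    (hw : carrier A n = carrier A' n) (hzero : ∀ N, ∃ b ≤ N, carrier A n b = 0) :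
    increment A (n + 1) = increment A' (n + 1) := by
  funext k
  obtain ⟨b, hbk, hb⟩ := hzero (k - 1)
  have hb' : carrier A' n b = 0 := hw ▸ hb
  replace hbk : b + 1 ≤ k := by omega
  induction k, hbk using Int.leInduction with
  | base => rw [hA.increment_succ_of_carrier_eq_zero hb, hA'.increment_succ_of_carrier_eq_zero hb']
  | succ j _ ih => rw [hA.increment_succ, hA'.increment_succ, ih, hw]

lemma carrier_eq_and_oddGapsBothDir (hA : IsTbbOrbit A) (hA' : IsTbbOrbit A')
    (hw : carrier A 0 = carrier A' 0) (hodd : OddGapsBothDir (carrier A 0)) {n : ℤ}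
    (hn : 0 ≤ n) : carrier A n = carrier A' n ∧ OddGapsBothDir (carrier A n) := by
  induction n, hn using Int.leInduction with
  | base => exact ⟨hw, hodd⟩
  | succ n _ ih =>
    have hinc := hA.increment_succ_eq hA' ih.1 ih.2.exists_le_eq_zero
    refine ⟨funext fun k => ?_, hA.oddGapsBothDir_succ ih.2⟩
    rw [hA.carrier_succ, hA'.carrier_succ, ih.1, hinc]

lemma increment_eq (hA : IsTbbOrbit A) (hA' : IsTbbOrbit A')
    (hw : carrier A 0 = carrier A' 0) (hodd : OddGapsBothDir (carrier A 0)) {n : ℤ}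
    (hn : 1 ≤ n) : increment A n = increment A' n := by
  obtain ⟨hwn, hoddn⟩ := hA.carrier_eq_and_oddGapsBothDir hA' hw hodd (by omega : 0 ≤ n - 1)
  simpa using hA.increment_succ_eq hA' hwn hoddn.exists_le_eq_zero

end IsTbbOrbit

namespace inSinv

variable {S : ℤ → ℤ}

lemma isTbbOrbit (hS : inSinv S) : IsTbbOrbit (fun k => Titer k S) :=
  ⟨fun k => (hS k).1.2, fun k => (hS k).2.1, hS.Titer_succ⟩

lemma isTbbOrbit_reflect (hS : inSinv S) : IsTbbOrbit (fun k => reflect (Titer (-k) S)) where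
  step k := (hS (-k)).recurrentAbove_reflect.step
  bddAbove k := (hS (-k)).recurrentAbove_reflect.bddAbove
  succ k := by
    simp only [neg_add, ← sub_eq_add_neg, hS.Titer_sub_one, Tbb_reflect (hS (-k)).2.2.1]

lemma carrier_zero (hS : inSinv S) :
    carrier (fun k => Titer k S) 0 = fun k => ballMax (Titer k S) 0 := by
  funext k
  simp [carrier, (hS k).1.1]

lemma carrier_reflect_zero (hS : inSinv S) :
    carrier (fun k => reflect (Titer (-k) S)) 0 = fun k => ballMax (Titer (-k - 1) S) 0 := by
  funext k
  have hmin := (hS (-k - 1)).recurrentAbove.ballMin_Tbb 0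
  rw [← hS.Titer_succ, sub_add_cancel] at hmin
  simp [carrier, ballMax_reflect (hS (-k)).2.2.1, (hS (-k)).1.1, hmin]
  ring

end inSinv

/-- If two configurations `η, η'` with path encodings in `𝒮^{inv}` have the
same current sequence `(w^k)_{k∈ℤ}` at the origin, and this sequence has infinitely many odd
gaps between zeros in both directions, then `η = η'`. -/
theorem stmt_11 (S S' : ℤ → ℤ) (hS : inSinv S) (hS' : inSinv S')
    (η η' : ℤ → ℤ)
    (hη : ∀ n : ℤ, η n = if S n - S (n - 1) = -1 then 1 else 0)
    (hη' : ∀ n : ℤ, η' n = if S' n - S' (n - 1) = -1 then 1 else 0)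
    (hw : ∀ k : ℤ, ballMax (Titer k S) 0 = ballMax (Titer k S') 0)
    (hodd : OddGapsBothDir (fun k => ballMax (Titer k S) 0)) :
    η = η' := by
  have hstep : ∀ n, S n - S (n - 1) = S' n - S' (n - 1) := by
    intro n
    rcases le_or_gt 1 n with hn | hn
    · have := hS.isTbbOrbit.increment_eq hS'.isTbbOrbit
        (by rw [hS.carrier_zero, hS'.carrier_zero]; exact funext hw) (by rwa [hS.carrier_zero]) hn
      simpa [increment] using congrFun this 0
    · have := hS.isTbbOrbit_reflect.increment_eq hS'.isTbbOrbit_reflect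
        (by rw [hS.carrier_reflect_zero, hS'.carrier_reflect_zero]; exact funext fun k => hw _)
        (by rw [hS.carrier_reflect_zero]; exact hodd.comp_neg_sub_one) (by omega : 1 ≤ 1 - n)
      have h0 := congrFun this 0
      simp only [increment, reflect_apply, neg_zero, Titer_zero, sub_sub_cancel_left,
        show -(1 - n) = n - 1 by ring, neg_neg] at h0
      linarith
  funext n
  rw [hη, hη', hstep]
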